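/- arXiv:2112.01820 — 4 statements merged into one kernel-verified Lean document; each statement's English description precedes it below -/
import Mathlib

section
/- For every k ≥ 2, there exist k-1 hypergraphs on a common vertex set, each polychromatic k-colorable, whose union is not properly (k-1)-colorable. -/
/-- Sharpness of the Union Lemma: for every `k ≥ 2` there exist `k-1` hypergraphs
on a common vertex set, each polychromatic `k`-colorable, whose union is not
properly `(k-1)`-colorable. -/
theorem stmt_1 (k : ℕ) (hk : 2 ≤ k) :
    ∃ (V : Type) (E : Fin (k - 1) → Set (Set V)),
      (∀ i : Fin (k - 1), ∃ c : V → Fin k,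
        ∀ e ∈ E i, ∀ j : Fin k, ∃ v ∈ e, c v = j) ∧
      ¬ ∃ c : V → Fin (k - 1), ∀ i : Fin (k - 1), ∀ e ∈ E i,
        (∃ v ∈ e, ∃ w ∈ e, v ≠ w) → ∃ v ∈ e, ∃ w ∈ e, c v ≠ c w := by
  refine ⟨Fin (k - 1) → Fin k,
    fun i => {S | ∀ j : Fin k, ∃ f ∈ S, f i = j}, ?_, ?_⟩
  · intro i
    exact ⟨fun f => f i, fun e he j => he j⟩
  · rintro ⟨c, hc⟩
    by_cases hA : ∃ i j : Fin (k - 1), ∀ m : Fin k, ∃ f, c f = j ∧ f i = m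
    · obtain ⟨i, j, hij⟩ := hA
      have he : {f : Fin (k - 1) → Fin k | c f = j} ∈
          {S : Set (Fin (k - 1) → Fin k) | ∀ m : Fin k, ∃ f ∈ S, f i = m} := by
        intro m
        obtain ⟨f, hf1, hf2⟩ := hij m
        exact ⟨f, hf1, hf2⟩
      have hnt : ∃ v ∈ {f : Fin (k - 1) → Fin k | c f = j},
          ∃ w ∈ {f : Fin (k - 1) → Fin k | c f = j}, v ≠ w := by
        obtain ⟨f, hf1, hf2⟩ := he ⟨0, by omega⟩
        obtain ⟨g, hg1, hg2⟩ := he ⟨1, by omega⟩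
        refine ⟨f, hf1, g, hg1, ?_⟩
        intro hfg
        rw [hfg] at hf2
        rw [hf2] at hg2
        exact absurd (congrArg Fin.val hg2) (by simp)
      obtain ⟨v, hv, w, hw, hvw⟩ := hc i _ he hnt
      exact hvw (hv.trans hw.symm)
    · push_neg at hA
      choose a ha using hA
      have := ha (c (fun i => a i i)) (c (fun i => a i i)) (fun i => a i i) rfl
      exact this rfl
end

section
/- Let D = (V,A) be a finite complete multidigraph and 0 < δ < 1 with |V| > 1/δ. Then there exists a probability distribution w on V such that for each x ∈ V, either (w(x) ≤ 2δ and w(N⁻(x)) ≥ 1/2), or (δ ≤ w(x) ≤ 4δ). Moreover, the second alternative holds for at most 1/δ vertices. -/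
open Finset


private lemma continuous_inf'_aux {α X : Type*} [TopologicalSpace X]
    (s : Finset α) (hs : s.Nonempty) (g : α → X → ℝ) (hg : ∀ i, Continuous (g i)) :
    Continuous fun w => s.inf' hs fun i => g i w := by
  induction hs using Finset.Nonempty.cons_induction with
  | singleton a => simpa using hg a
  | cons a s ha hs ih =>
      have h : (fun w => (Finset.cons a s ha).inf' (Finset.cons_nonempty ha)
          fun i => g i w) = fun w => min (g a w) (s.inf' hs fun i => g i w) := by
        funext w
        rw [Finset.inf'_cons hs]
      rw [h]
      exact (hg a).min ih

private lemma exists_half_vertex {V : Type*} [Fintype V] [DecidableEq V] (A : V → V → Prop)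
    [∀ x y : V, Decidable (A x y)]
    (hcomplete : ∀ x y : V, x ≠ y → A x y ∨ A y x)
    (S : Finset V) (w : V → ℝ) (h0 : ∀ v, 0 ≤ w v) (hsum : ∑ v ∈ S, w v = 1) :
    ∃ x ∈ S, (1:ℝ)/2 ≤ ∑ y ∈ S.filter (fun y => y = x ∨ A y x), w y := by
  by_contra hcon
  push_neg at hcon
  set F : V → V → ℝ := fun x y => if y = x ∨ A y x then w x * w y else 0 with hF
  have hQrw : ∀ x, w x * (∑ y ∈ S.filter (fun y => y = x ∨ A y x), w y) = ∑ y ∈ S, F x y := by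
    intro x
    simp only [hF]
    rw [← Finset.sum_filter (fun y => y = x ∨ A y x) (fun y => w x * w y), ← Finset.mul_sum]
  -- upper bound
  have hxpos : ∃ x ∈ S, 0 < w x := by
    by_contra hall
    push_neg at hall
    have : ∑ v ∈ S, w v = 0 := Finset.sum_eq_zero fun v hv => le_antisymm (hall v hv) (h0 v)
    rw [this] at hsum; norm_num at hsum
  obtain ⟨xp, hxpS, hxp⟩ := hxpos
  have hupper : ∑ x ∈ S, w x * (∑ y ∈ S.filter (fun y => y = x ∨ A y x), w y)
      < ∑ x ∈ S, w x * (1/2) := by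
    refine Finset.sum_lt_sum (fun i hi => ?_) ⟨xp, hxpS, ?_⟩
    · exact mul_le_mul_of_nonneg_left (le_of_lt (hcon i hi)) (h0 i)
    · exact mul_lt_mul_of_pos_left (hcon xp hxpS) hxp
  have hhalf : ∑ x ∈ S, w x * ((1:ℝ)/2) = 1/2 := by
    rw [← Finset.sum_mul, hsum, one_mul]
  -- lower bound via symmetry
  have hsym : ∑ x ∈ S, ∑ y ∈ S, F y x = ∑ x ∈ S, ∑ y ∈ S, F x y := Finset.sum_comm
  have hpt : ∀ x ∈ S, ∀ y ∈ S, w x * w y ≤ F x y + F y x := by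
    intro x hx y hy
    by_cases hxy : y = x
    · subst hxy
      have h1 : F y y = w y * w y := by simp [hF]
      rw [h1]
      nlinarith [h0 y]
    · rcases hcomplete x y (fun h => hxy h.symm) with h | h
      · have : F y x = w y * w x := by simp [hF, h]
        rw [this]
        have : (0:ℝ) ≤ F x y := by
          simp only [hF]; split
          · exact mul_nonneg (h0 x) (h0 y)
          · exact le_refl 0
        nlinarith
      · have : F x y = w x * w y := by simp [hF, h]
        rw [this]
        have : (0:ℝ) ≤ F y x := by
          simp only [hF]; split
          · exact mul_nonneg (h0 y) (h0 x)
          · exact le_refl 0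
        nlinarith
  have hlow : (1:ℝ) ≤ ∑ x ∈ S, ∑ y ∈ S, F x y + ∑ x ∈ S, ∑ y ∈ S, F y x := by
    have h1 : ∑ x ∈ S, ∑ y ∈ S, (w x * w y) = 1 := by
      rw [← Finset.sum_mul_sum, hsum]
      norm_num
    calc (1:ℝ) = ∑ x ∈ S, ∑ y ∈ S, (w x * w y) := h1.symm
      _ ≤ ∑ x ∈ S, ∑ y ∈ S, (F x y + F y x) := by
          refine Finset.sum_le_sum fun x hx => Finset.sum_le_sum fun y hy => hpt x hx y hy
      _ = ∑ x ∈ S, (∑ y ∈ S, F x y + ∑ y ∈ S, F y x) := by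
          refine Finset.sum_congr rfl fun x _ => ?_
          rw [Finset.sum_add_distrib]
      _ = ∑ x ∈ S, ∑ y ∈ S, F x y + ∑ x ∈ S, ∑ y ∈ S, F y x := Finset.sum_add_distrib
  rw [hsym] at hlow
  have hQ : ∑ x ∈ S, w x * (∑ y ∈ S.filter (fun y => y = x ∨ A y x), w y)
      = ∑ x ∈ S, ∑ y ∈ S, F x y := Finset.sum_congr rfl fun x _ => hQrw x
  rw [hQ, hhalf] at hupper
  linarith


section half
variable {V : Type*} [Fintype V] [DecidableEq V] (A : V → V → Prop)
  [∀ x y : V, Decidable (A x y)]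

private theorem half_lemma (hcomplete : ∀ x y : V, x ≠ y → A x y ∨ A y x) :
    ∀ S : Finset V, ∃ w : V → ℝ, (∀ v, 0 ≤ w v) ∧ (∀ v, v ∉ S → w v = 0) ∧
      (S.Nonempty → (∑ v ∈ S, w v = 1) ∧
        ∀ x ∈ S, (1:ℝ)/2 ≤ ∑ y ∈ S.filter (fun y => y = x ∨ A y x), w y) := by
  intro S
  induction S using Finset.strongInductionOn with
  | _ S IH =>
  by_cases hS : S.Nonempty
  swap
  · exact ⟨fun _ => 0, fun _ => le_refl 0, fun _ _ => rfl, fun h => absurd h hS⟩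
  -- the feasible set
  set C : Set (V → ℝ) :=
    {w | (∀ v, 0 ≤ w v) ∧ (∀ v, v ∉ S → w v = 0) ∧ ∑ v ∈ S, w v = 1} with hCdef
  have hCeq : C = stdSimplex ℝ V ∩ {w : V → ℝ | ∀ v, v ∉ S → w v = 0} := by
    ext w
    constructor
    · rintro ⟨h0, hsupp, hsum⟩
      refine ⟨⟨h0, ?_⟩, hsupp⟩
      rw [← Finset.sum_subset (Finset.subset_univ S) (fun v _ hv => hsupp v hv)]
      exact hsum
    · rintro ⟨⟨h0, hsum⟩, hsupp⟩
      refine ⟨h0, hsupp, ?_⟩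
      rw [Finset.sum_subset (Finset.subset_univ S) (fun v _ hv => hsupp v hv)]
      exact hsum
  have hclosed : IsClosed {w : V → ℝ | ∀ v, v ∉ S → w v = 0} := by
    have he : {w : V → ℝ | ∀ v, v ∉ S → w v = 0}
        = ⋂ (v : V), ⋂ (_ : v ∉ S), {w : V → ℝ | w v = 0} := by
      ext w; simp [Set.mem_iInter]
    rw [he]
    exact isClosed_iInter fun v => isClosed_iInter fun _ =>
      isClosed_eq (continuous_apply v) continuous_const
  have hCcomp : IsCompact C := by
    rw [hCeq]
    exact (isCompact_stdSimplex ℝ V).inter_right hclosed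
  have hCne : C.Nonempty := by
    obtain ⟨s₀, hs₀⟩ := hS
    refine ⟨fun v => if v = s₀ then 1 else 0, fun v => ?_, fun v hv => ?_, ?_⟩
    · show (0:ℝ) ≤ if v = s₀ then (1:ℝ) else 0
      split <;> norm_num
    · show (if v = s₀ then (1:ℝ) else 0) = 0
      exact if_neg (by rintro rfl; exact hv hs₀)
    · simp [Finset.sum_ite_eq', hs₀]
  set g : V → (V → ℝ) → ℝ :=
    fun x w => ∑ y ∈ S.filter (fun y => y = x ∨ A y x), w y with hgdef
  have hgcont : ∀ x, Continuous (g x) :=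
    fun x => continuous_finset_sum _ (fun y _ => continuous_apply y)
  have hg0 : ∀ x (w : V → ℝ), (∀ v, 0 ≤ w v) → 0 ≤ g x w :=
    fun x w h0 => Finset.sum_nonneg fun y _ => h0 y
  obtain ⟨w', hw'C, hw'max⟩ := hCcomp.exists_isMaxOn hCne
    (continuous_inf'_aux S hS g hgcont).continuousOn
  obtain ⟨h0, hsupp, hsum⟩ := hw'C
  set c : ℝ := S.inf' hS fun x => g x w' with hcdef
  by_cases hc : (1:ℝ)/2 ≤ c
  · refine ⟨w', h0, hsupp, fun _ => ⟨hsum, fun x hx => le_trans hc ?_⟩⟩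
    exact Finset.inf'_le _ hx
  push_neg at hc
  exfalso
  have hc0 : 0 ≤ c := by
    rw [hcdef, Finset.le_inf'_iff]
    exact fun x _ => hg0 x w' h0
  obtain ⟨x₀, hx₀S, hx₀⟩ := exists_half_vertex A hcomplete S w' h0 hsum
  set T : Finset V := S.filter (fun x => g x w' ≤ c) with hTdef
  have hTsub : T ⊆ S := Finset.filter_subset _ _
  have hx₀T : x₀ ∉ T := by
    intro h
    have := (Finset.mem_filter.mp h).2
    linarith
  have hTss : T ⊂ S := ⟨hTsub, fun hST => hx₀T (hST hx₀S)⟩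
  have hTne : T.Nonempty := by
    obtain ⟨x₁, hx₁, he⟩ := Finset.exists_mem_eq_inf' hS (fun x => g x w')
    exact ⟨x₁, Finset.mem_filter.mpr ⟨hx₁, le_of_eq he.symm⟩⟩
  obtain ⟨u, hu0, husupp, hugoal⟩ := IH T hTss
  obtain ⟨husum, huhalf⟩ := hugoal hTne
  have hx₀ST : x₀ ∈ S \ T := Finset.mem_sdiff.mpr ⟨hx₀S, hx₀T⟩
  have hSTne : (S \ T).Nonempty := ⟨x₀, hx₀ST⟩
  set m : ℝ := (S \ T).inf' hSTne (fun x => g x w') with hmdef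
  have hcm : c < m := by
    rw [hmdef, Finset.lt_inf'_iff]
    intro x hx
    obtain ⟨hxS, hxT⟩ := Finset.mem_sdiff.mp hx
    by_contra hle
    push_neg at hle
    exact hxT (Finset.mem_filter.mpr ⟨hxS, hle⟩)
  set t : ℝ := (m - c)/(2*(m+1)) with htdef
  have hm1 : 0 < m + 1 := by linarith
  have ht0 : 0 < t := div_pos (by linarith) (by linarith)
  have ht1 : t < 1 := by
    rw [htdef, div_lt_one (by linarith)]
    linarith
  set w2 : V → ℝ := fun v => (1 - t) * w' v + t * u v with hw2def
  have hw2C : w2 ∈ C := by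
    refine ⟨fun v => ?_, fun v hv => ?_, ?_⟩
    · show (0:ℝ) ≤ (1 - t) * w' v + t * u v
      have := h0 v; have := hu0 v; nlinarith
    · rw [hw2def]
      simp only
      rw [hsupp v hv, husupp v (fun h => hv (hTsub h))]
      ring
    · have husumS : ∑ v ∈ S, u v = 1 := by
        rw [← Finset.sum_subset hTsub (fun v _ hv => husupp v hv)]
        exact husum
      rw [hw2def]
      simp only
      rw [Finset.sum_add_distrib, ← Finset.mul_sum, ← Finset.mul_sum, hsum, husumS]
      ring
  have hglin : ∀ x, g x w2 = (1 - t) * g x w' + t * g x u := by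
    intro x
    rw [hgdef]
    simp only [hw2def]
    rw [Finset.sum_add_distrib, ← Finset.mul_sum, ← Finset.mul_sum]
  have hfw2 : c < S.inf' hS fun x => g x w2 := by
    rw [Finset.lt_inf'_iff]
    intro x hxS
    by_cases hxT : x ∈ T
    · have h1 : c ≤ g x w' := Finset.inf'_le _ hxS
      have h2 : (1:ℝ)/2 ≤ g x u := by
        refine le_trans (huhalf x hxT) ?_
        refine Finset.sum_le_sum_of_subset_of_nonneg ?_ (fun y _ _ => hu0 y)
        exact Finset.filter_subset_filter _ hTsub
      rw [hglin]
      nlinarith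
    · have hxST : x ∈ S \ T := Finset.mem_sdiff.mpr ⟨hxS, hxT⟩
      have h1 : m ≤ g x w' := Finset.inf'_le _ hxST
      have h2 : 0 ≤ g x u := hg0 x u hu0
      have htm : t * m ≤ (m - c)/2 := by
        rw [htdef, div_mul_eq_mul_div, div_le_div_iff₀ (by linarith) (by norm_num)]
        nlinarith
      rw [hglin]
      nlinarith
  have hle : (S.inf' hS fun x => g x w2) ≤ c := hw'max hw2C
  linarith

end half

noncomputable def mdStage {V : Type*} [Fintype V] [DecidableEq V]
    (δ δK : ℝ) (u : Finset V → V → ℝ) : ℕ → Finset V × (V → ℝ)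
  | 0 => (Finset.univ, fun _ => 0)
  | k + 1 =>
    let p := mdStage δ δK u k
    let W : V → ℝ := fun v => p.2 v + δK * u p.1 v
    (p.1.filter (fun v => W v < δ), W)


/-- For a finite complete multidigraph on more than `1/δ` vertices there is a
probability distribution `w` such that every vertex `x` satisfies either
`w(x) ≤ 2δ` and `w(N⁻(x)) ≥ 1/2`, or `δ ≤ w(x) ≤ 4δ`; the latter alternative
holds for at most `1/δ` vertices. -/
theorem stmt_7 {V : Type*} [Fintype V] [DecidableEq V] (A : V → V → Prop)
    [∀ x y : V, Decidable (A x y)]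
    (hcomplete : ∀ x y : V, x ≠ y → A x y ∨ A y x)
    (δ : ℝ) (hδ0 : 0 < δ) (hδ1 : δ < 1) (hcard : (1 : ℝ) / δ < Fintype.card V) :
    ∃ w : V → ℝ, (∀ v, 0 ≤ w v) ∧ (∑ v, w v = 1) ∧
      (∀ x : V,
        (w x ≤ 2 * δ ∧ (1 : ℝ) / 2 ≤ ∑ y ∈ univ.filter (fun y => y = x ∨ A y x), w y) ∨
        (δ ≤ w x ∧ w x ≤ 4 * δ)) ∧
      ((univ.filter (fun x => δ ≤ w x ∧ w x ≤ 4 * δ)).card : ℝ) ≤ 1 / δ := by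

  classical
  obtain ⟨u, hu⟩ := Classical.axiomOfChoice (half_lemma A hcomplete)
  have hu0 : ∀ S (v : V), 0 ≤ u S v := fun S v => (hu S).1 v
  have husupp : ∀ S (v : V), v ∉ S → u S v = 0 := fun S v => (hu S).2.1 v
  have huprop : ∀ S : Finset V, S.Nonempty → (∑ v ∈ S, u S v = 1) ∧
      ∀ x ∈ S, (1:ℝ)/2 ≤ ∑ y ∈ S.filter (fun y => y = x ∨ A y x), u S y :=
    fun S => (hu S).2.2
  set K : ℕ := ⌈1/δ⌉₊ with hKdef
  have hK0 : 0 < K := Nat.ceil_pos.mpr (by positivity)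
  have hKge : 1/δ ≤ (K:ℝ) := Nat.le_ceil _
  set δK : ℝ := 1/(K:ℝ) with hδKdef
  have hKne : (K:ℝ) ≠ 0 := by positivity
  have hδK0 : 0 < δK := by positivity
  have hδKδ : δK ≤ δ := by
    rw [hδKdef, div_le_iff₀ (by positivity)]
    calc (1:ℝ) = δ * (1/δ) := by field_simp
    _ ≤ δ * K := by
        exact mul_le_mul_of_nonneg_left hKge (le_of_lt hδ0)
  have hKδK : (K:ℝ) * δK = 1 := by
    rw [hδKdef]; field_simp
  have hVpos : (0:ℝ) < Fintype.card V := lt_trans (by positivity) hcard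
  have hVne : (Finset.univ : Finset V).Nonempty := by
    rw [← Finset.card_pos]
    simp only [Finset.card_univ]
    exact_mod_cast hVpos
  set P : ℕ → Finset V × (V → ℝ) := mdStage δ δK u with hPdef
  have hPsucc : ∀ k : ℕ, P (k+1) =
      ((P k).1.filter (fun v => (P k).2 v + δK * u (P k).1 v < δ),
        fun v => (P k).2 v + δK * u (P k).1 v) := fun k => rfl
  have hP0 : P 0 = (Finset.univ, fun _ => (0:ℝ)) := rfl
  -- master invariant
  have main : ∀ k : ℕ, k ≤ K →
      (∀ v, 0 ≤ (P k).2 v) ∧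
      (∑ v, (P k).2 v = (k:ℝ) * δK) ∧
      (∀ v ∈ (P k).1, (P k).2 v < δ) ∧
      (∀ v, v ∉ (P k).1 → δ ≤ (P k).2 v ∧ (P k).2 v ≤ δ + δK) ∧
      ((P k).1).Nonempty ∧
      (∀ x ∈ (P k).1,
        (k:ℝ) * δK / 2 ≤ ∑ y ∈ univ.filter (fun y => y = x ∨ A y x), (P k).2 y) := by
    intro k
    induction k with
    | zero =>
        intro _
        rw [hP0]
        refine ⟨fun v => le_refl 0, by simp, fun v _ => hδ0, ?_, hVne, ?_⟩
        · intro v hv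
          exact absurd (Finset.mem_univ v) hv
        · intro x _
          simp
    | succ k IH =>
        intro hk1
        have hk : k ≤ K := Nat.le_of_succ_le hk1
        obtain ⟨i1, i2, i3, i4, i5, i6⟩ := IH hk
        set S := (P k).1
        set W := (P k).2
        obtain ⟨husum, huhalf⟩ := huprop S i5
        have husumU : ∑ v, u S v = 1 := by
          rw [← Finset.sum_subset (Finset.subset_univ S) (fun v _ hv => husupp S v hv)]
          exact husum
        have huv1 : ∀ v ∈ S, u S v ≤ 1 := by
          intro v hv
          rw [← husum]
          exact Finset.single_le_sum (fun y _ => hu0 S y) hv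
        rw [hPsucc k]
        simp only
        constructor
        · intro v
          have := i1 v; have := hu0 S v
          positivity
        refine ⟨?_, ?_, ?_, ?_, ?_⟩
        · rw [Finset.sum_add_distrib, i2, ← Finset.mul_sum, husumU]
          push_cast
          ring
        · intro v hv
          exact (Finset.mem_filter.mp hv).2
        · intro v hv
          rw [Finset.mem_filter] at hv
          push_neg at hv
          by_cases hvS : v ∈ S
          · have hge := hv hvS
            refine ⟨hge, ?_⟩
            have h1 : W v < δ := i3 v hvS
            have h2 : u S v ≤ 1 := huv1 v hvS
            nlinarith
          · rw [husupp S v hvS, mul_zero, add_zero]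
            exact i4 v hvS
        · -- nonemptiness
          by_contra hemp
          rw [Finset.not_nonempty_iff_eq_empty] at hemp
          have hall : ∀ v : V, δ ≤ W v + δK * u S v := by
            intro v
            by_cases hvS : v ∈ S
            · by_cases hlt : W v + δK * u S v < δ
              · exfalso
                have : v ∈ Finset.filter (fun v => W v + δK * u S v < δ) S :=
                  Finset.mem_filter.mpr ⟨hvS, hlt⟩
                rw [hemp] at this
                exact absurd this (Finset.notMem_empty v)
              · linarith
            · rw [husupp S v hvS, mul_zero, add_zero]
              exact (i4 v hvS).1
          have hsumge : (Fintype.card V : ℝ) * δ ≤ ∑ v, (W v + δK * u S v) := by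
            calc (Fintype.card V : ℝ) * δ = (Finset.univ : Finset V).card • δ := by
                  rw [nsmul_eq_mul, Finset.card_univ]
            _ ≤ ∑ v, (W v + δK * u S v) :=
                  Finset.card_nsmul_le_sum _ _ _ (fun x _ => hall x)
          have hsumeq : ∑ v, (W v + δK * u S v) = ((k:ℝ)+1) * δK := by
            rw [Finset.sum_add_distrib, i2, ← Finset.mul_sum, husumU]
            ring
          have hle1 : ((k:ℝ)+1) * δK ≤ 1 := by
            rw [← hKδK]
            have : ((k:ℝ)+1) ≤ (K:ℝ) := by exact_mod_cast hk1
            nlinarith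
          have hgt1 : 1 < (Fintype.card V : ℝ) * δ := (div_lt_iff₀ hδ0).mp hcard
          linarith
        · -- half condition
          intro x hx
          have hxS : x ∈ S := Finset.mem_of_mem_filter x hx
          have h1 := i6 x hxS
          have h2 : (1:ℝ)/2 ≤ ∑ y ∈ univ.filter (fun y => y = x ∨ A y x), u S y := by
            refine le_trans (huhalf x hxS) ?_
            refine Finset.sum_le_sum_of_subset_of_nonneg ?_ (fun y _ _ => hu0 S y)
            exact Finset.filter_subset_filter _ (Finset.subset_univ S)
          rw [Finset.sum_add_distrib, ← Finset.mul_sum]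
          push_cast
          nlinarith
  obtain ⟨f1, f2, f3, f4, f5, f6⟩ := main K (le_refl K)
  refine ⟨(P K).2, f1, ?_, ?_, ?_⟩
  · rw [f2, hKδK]
  · intro x
    by_cases hx : x ∈ (P K).1
    · left
      constructor
      · have := f3 x hx; linarith
      · have := f6 x hx
        rw [hKδK] at this
        linarith
    · right
      obtain ⟨hge, hle⟩ := f4 x hx
      exact ⟨hge, by linarith⟩
  · have hcardle : ((univ.filter (fun x => δ ≤ (P K).2 x ∧ (P K).2 x ≤ 4*δ)).card : ℝ) * δ ≤ 1 := by
      set T := univ.filter (fun x => δ ≤ (P K).2 x ∧ (P K).2 x ≤ 4*δ) with hTdef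
      have h1 : (T.card : ℝ) * δ = T.card • δ := by rw [nsmul_eq_mul]
      have h2 : T.card • δ ≤ ∑ v ∈ T, (P K).2 v := by
        refine Finset.card_nsmul_le_sum _ _ _ (fun x hxT => ?_)
        exact ((Finset.mem_filter.mp hxT).2).1
      have h3 : ∑ v ∈ T, (P K).2 v ≤ ∑ v, (P K).2 v :=
        Finset.sum_le_sum_of_subset_of_nonneg (Finset.subset_univ T) (fun y _ _ => f1 y)
      rw [f2, hKδK] at h3
      linarith
    rw [le_div_iff₀ hδ0]
    exact hcardle
end

section
/- Let 0 < δ < 1 and let D = (V,A) be a finite complete multidigraph on more than 1/δ vertices whose arc set is the union of k quasi orders ≺₁,…,≺_k. Then there exists a probability distribution w on V and a partition of V into sets T₁,…,T_k, R such that for every i ∈ [k] and x ∈ T_i, w(x) ≤ 2δ and w(N⁻_i(x)) ≥ 1/(2k), and for every x ∈ R, δ ≤ w(x) ≤ 4δ. -/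
/-!
Let `B` be the skew-symmetric matrix with `B y x = [y ≺ x] - [x ≺ y]`, where `y ≺ x` means
`y ≺ᵢ x` for some `i`. By Sion's minimax theorem the symmetric game with payoff matrix `B`,
played with mixed strategies capped at `2δ`, has a capped strategy `w` that no capped strategy
beats. Shifting mass towards any vertex `x` with `w x < 2δ` shows that `w` scores nonnegatively
against `x`; by completeness the closed in-neighbourhood of `x` then has weight at least
`(1 + w x) / 2`, so by the union bound some `N⁻ᵢ(x)` has weight at least `1 / (2k)`. Vertices
with `w x < δ` are put in such a `Tᵢ`, the others in `R`. The cap is feasible because the uniform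
distribution has weight `1 / |V| < δ`.
-/

open Finset Matrix

section

variable {V : Type*} [Fintype V]

theorem dotProduct_vecMul_self_eq_zero {B : Matrix V V ℝ} (hB : Bᵀ = -B) (w : V → ℝ) :
    w ⬝ᵥ (w ᵥ* B) = 0 := by
  have h : w ⬝ᵥ (w ᵥ* B) = -(w ⬝ᵥ (w ᵥ* B)) :=
    calc w ⬝ᵥ (w ᵥ* B) = w ⬝ᵥ (B *ᵥ w) := by rw [dotProduct_comm, dotProduct_mulVec]
      _ = -(w ⬝ᵥ (w ᵥ* B)) := by rw [← mulVec_transpose, hB, neg_mulVec, dotProduct_neg, neg_neg]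
  linarith

theorem exists_forall_dotProduct_vecMul_nonneg {B : Matrix V V ℝ} (hB : Bᵀ = -B)
    {W : Set (V → ℝ)} (hne : W.Nonempty) (hconv : Convex ℝ W) (hcomp : IsCompact W) :
    ∃ w ∈ W, ∀ w' ∈ W, 0 ≤ w' ⬝ᵥ (w ᵥ* B) := by
  classical
  let β : (V → ℝ) →ₗ[ℝ] (V → ℝ) →ₗ[ℝ] ℝ := toLinearMap₂' ℝ Bᵀ
  obtain ⟨a, ha, b, hb, hsaddle⟩ := Sion.exists_isSaddlePointOn (f := fun x y => β x y)
    hne hconv hcomp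
    (fun y _ => (β.flip y).continuous_of_finiteDimensional.lowerSemicontinuous
      |>.lowerSemicontinuousOn W)
    (fun y _ => ((β.flip y).convexOn hconv).quasiconvexOn) hconv hne hcomp
    (fun x _ => (β x).continuous_of_finiteDimensional.upperSemicontinuous
      |>.upperSemicontinuousOn W)
    (fun x _ => ((β x).concaveOn hconv).quasiconcaveOn)
  refine ⟨b, hb, fun w' hw' => ?_⟩
  -- the saddle point inequality at `(w', a)` reads `β a a ≤ β w' b`, and `β a a = 0`
  simpa only [β, toLinearMap₂'_apply', mulVec_transpose, dotProduct_vecMul_self_eq_zero hB]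
    using hsaddle w' hw' a ha

def cappedSimplex (V : Type*) [Fintype V] (γ : ℝ) : Set (V → ℝ) :=
  stdSimplex ℝ V ∩ Set.Iic (Function.const V γ)

theorem convex_cappedSimplex (γ : ℝ) : Convex ℝ (cappedSimplex V γ) :=
  (convex_stdSimplex ℝ V).inter (convex_Iic _)

theorem isCompact_cappedSimplex (γ : ℝ) : IsCompact (cappedSimplex V γ) :=
  (isCompact_stdSimplex ℝ V).inter_right isClosed_Iic

theorem cappedSimplex_nonempty [Nonempty V] {γ : ℝ} (hγ : (Fintype.card V : ℝ)⁻¹ ≤ γ) :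
    (cappedSimplex V γ).Nonempty :=
  ⟨_, (stdSimplex.barycenter (𝕜 := ℝ)).2, fun _ => hγ⟩

theorem add_smul_single_sub_single_mem_cappedSimplex [DecidableEq V] {γ ε : ℝ} {w : V → ℝ}
    (hw : w ∈ cappedSimplex V γ) {x y : V} (hxy : x ≠ y) (hε : 0 ≤ ε) (hεy : ε ≤ w y)
    (hεx : w x + ε ≤ γ) :
    w + ε • (Pi.single x 1 - Pi.single y 1) ∈ cappedSimplex V γ := by
  obtain ⟨⟨hw0, hw1⟩, hwγ : ∀ z, w z ≤ γ⟩ := hw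
  have hcoord (z : V) : (w + ε • (Pi.single x 1 - Pi.single y 1) : V → ℝ) z =
      w z + ε * ((if z = x then 1 else 0) - (if z = y then 1 else 0)) := by
    simp [Pi.single_apply]
  refine ⟨⟨fun z => ?_, ?_⟩, fun z => show _ ≤ γ from ?_⟩
  · rw [hcoord]
    split_ifs <;> subst_vars <;> linarith [hw0 z]
  · simp [Finset.sum_add_distrib, ← Finset.mul_sum, Finset.sum_sub_distrib, hw1]
  · rw [hcoord]
    split_ifs <;> subst_vars <;> linarith [hwγ z]

theorem apply_nonneg_of_lt_of_forall_dotProduct_nonneg {γ : ℝ} {w f : V → ℝ}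
    (hw : w ∈ cappedSimplex V γ) (hwf : w ⬝ᵥ f = 0)
    (hopt : ∀ w' ∈ cappedSimplex V γ, 0 ≤ w' ⬝ᵥ f) {x : V} (hx : w x < γ) :
    0 ≤ f x := by
  classical
  by_contra! hfx
  obtain ⟨y, -, hy⟩ : ∃ y ∈ univ, w y * f x < w y * f y := by
    apply exists_lt_of_sum_lt
    rw [← Finset.sum_mul, hw.1.2, one_mul]
    exact hfx.trans_eq hwf.symm
  have hwy : 0 < w y := (hw.1.1 y).lt_of_ne fun h => by simp [← h] at hy
  have hfxy : f x < f y := lt_of_mul_lt_mul_left hy hwy.le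
  set ε := min (w y) (γ - w x)
  have hε : 0 < ε := lt_min hwy (by linarith)
  have hmem := add_smul_single_sub_single_mem_cappedSimplex hw (ne_of_apply_ne f hfxy.ne)
    hε.le (min_le_left _ _) (by linarith [min_le_right (w y) (γ - w x)])
  -- moving `ε` of mass from `y` to `x` changes the payoff by `ε * (f x - f y) < 0`
  have hpay := hopt _ hmem
  simp only [add_dotProduct, smul_dotProduct, sub_dotProduct, single_dotProduct, one_mul, hwf,
    smul_eq_mul] at hpay
  nlinarith

open Classical in
noncomputable def dominanceMatrix (r : V → V → Prop) : Matrix V V ℝ :=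
  Matrix.of fun y x => (if r y x then 1 else 0) - (if r x y then 1 else 0)

omit [Fintype V] in
theorem transpose_dominanceMatrix (r : V → V → Prop) :
    (dominanceMatrix r)ᵀ = -dominanceMatrix r := by
  ext y x
  simp [dominanceMatrix]

theorem one_add_le_two_mul_sum_of_vecMul_dominanceMatrix_nonneg [DecidableEq V]
    {r : V → V → Prop} [DecidableRel r] (htot : ∀ x y, x ≠ y → r x y ∨ r y x)
    {w : V → ℝ} (hw : w ∈ stdSimplex ℝ V) {x : V} (hx : 0 ≤ (w ᵥ* dominanceMatrix r) x) :
    1 + w x ≤ 2 * ∑ y ∈ univ.filter (fun y => y = x ∨ r y x), w y := by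
  -- summed over `y` this gives `1 + w x + (w ᵥ* dominanceMatrix r) x ≤ 2 * w(N)`; for `y ≠ x`
  -- outside `N`, totality gives `r x y`, so the matrix entry is `-1`
  have hpoint (y : V) : w y + (if y = x then w y else 0) + w y * dominanceMatrix r y x ≤
      2 * (if y = x ∨ r y x then w y else 0) := by
    have hwy := hw.1 y
    rcases eq_or_ne y x with rfl | hyx
    · simp only [dominanceMatrix, of_apply, sub_self, mul_zero, add_zero, true_or, ↓reduceIte]
      linarith
    by_cases hr : r y x
    · simp only [dominanceMatrix, of_apply, hyx, hr, or_true, if_true, if_false]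
      split_ifs <;> linarith
    · simp [dominanceMatrix, hyx, hr, (htot x y hyx.symm).resolve_right hr]
  have hsum := Finset.sum_le_sum fun y (_ : y ∈ univ) => hpoint y
  simp only [sum_add_distrib, sum_ite_eq', mem_univ, if_true, ← mul_sum, ← sum_filter] at hsum
  have hvec : (w ᵥ* dominanceMatrix r) x = ∑ y, w y * dominanceMatrix r y x := rfl
  linarith [hw.2]

theorem sum_filter_le_sum_sum_filter {ι : Type*} [Fintype ι] {w : V → ℝ} (hw : 0 ≤ w)
    {s : V → Prop} {p : ι → V → Prop} [DecidablePred s] [∀ i, DecidablePred (p i)]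
    (hs : ∀ y, s y → ∃ i, p i y) :
    ∑ y ∈ univ.filter s, w y ≤ ∑ i, ∑ y ∈ univ.filter (p i), w y := by
  simp only [sum_filter]
  rw [sum_comm]
  refine sum_le_sum fun y _ => ?_
  split_ifs with hy
  · obtain ⟨i, hi⟩ := hs y hy
    calc w y = if p i y then w y else 0 := (if_pos hi).symm
      _ ≤ ∑ j, if p j y then w y else 0 :=
        single_le_sum (f := fun j => if p j y then w y else 0)
          (fun j _ => ite_nonneg (hw y) le_rfl) (mem_univ i)
  · exact sum_nonneg fun j _ => ite_nonneg (hw y) le_rfl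

theorem exists_div_card_le_of_le_sum {ι : Type*} [Fintype ι] [Nonempty ι] {a : ι → ℝ} {c : ℝ}
    (h : c ≤ ∑ i, a i) : ∃ i, c / Fintype.card ι ≤ a i := by
  obtain ⟨i, -, hi⟩ := exists_le_of_sum_le (f := fun _ => c / Fintype.card ι) univ_nonempty
    (h.trans_eq' (by simp [mul_div_cancel₀ c (by positivity : (Fintype.card ι : ℝ) ≠ 0)]))
  exact ⟨i, hi⟩

theorem exists_le_sum_filter_of_vecMul_dominanceMatrix_nonneg [DecidableEq V] {ι : Type*}
    [Fintype ι] [Nonempty ι] (prec : ι → V → V → Prop) [∀ i x y, Decidable (prec i x y)]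
    (hcomplete : ∀ x y : V, x ≠ y → ∃ i, prec i x y ∨ prec i y x)
    {w : V → ℝ} (hw : w ∈ stdSimplex ℝ V) {x : V}
    (hx : 0 ≤ (w ᵥ* dominanceMatrix fun y x => ∃ i, prec i y x) x) :
    ∃ i, 1 / (2 * Fintype.card ι) ≤ ∑ y ∈ univ.filter (fun y => y = x ∨ prec i y x), w y := by
  have htot (y z : V) (hyz : y ≠ z) : (∃ i, prec i y z) ∨ ∃ i, prec i z y := by
    obtain ⟨i, h | h⟩ := hcomplete y z hyz
    exacts [Or.inl ⟨i, h⟩, Or.inr ⟨i, h⟩]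
  have hhalf := one_add_le_two_mul_sum_of_vecMul_dominanceMatrix_nonneg htot hw hx
  have hcover := sum_filter_le_sum_sum_filter hw.1 (s := fun y => y = x ∨ ∃ i, prec i y x)
    (p := fun i y => y = x ∨ prec i y x) fun y => by
      rintro (rfl | ⟨i, h⟩)
      exacts [⟨Classical.arbitrary ι, Or.inl rfl⟩, ⟨i, Or.inr h⟩]
  obtain ⟨i, hi⟩ := exists_div_card_le_of_le_sum (c := 1 / 2)
    (a := fun i => ∑ y ∈ univ.filter (fun y => y = x ∨ prec i y x), w y) (by linarith [hw.1 x])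
  exact ⟨i, by rwa [div_div] at hi⟩

end

theorem stmt_8_general {V : Type*} [Fintype V] [DecidableEq V] (k : ℕ) (hk : 1 ≤ k)
    (prec : Fin k → V → V → Prop)
    [∀ i x y, Decidable (prec i x y)]
    (hcomplete : ∀ x y : V, x ≠ y → ∃ i, prec i x y ∨ prec i y x)
    (δ : ℝ) (hδ0 : 0 < δ) (hcard : (1 : ℝ) / δ < Fintype.card V) :
    ∃ (w : V → ℝ) (T : Fin k → Set V) (R : Set V),
      (∀ v, 0 ≤ w v) ∧ (∑ v, w v = 1) ∧
      (∀ i j : Fin k, i ≠ j → Disjoint (T i) (T j)) ∧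
      (∀ i, Disjoint (T i) R) ∧
      ((⋃ i, T i) ∪ R = Set.univ) ∧
      (∀ i : Fin k, ∀ x ∈ T i, w x ≤ 2 * δ ∧
        (1 : ℝ) / (2 * k) ≤ ∑ y ∈ univ.filter (fun y => y = x ∨ prec i y x), w y) ∧
      (∀ x ∈ R, δ ≤ w x ∧ w x ≤ 4 * δ) := by
  have : NeZero k := ⟨by omega⟩
  have hcardpos : (0 : ℝ) < Fintype.card V := (one_div_pos.2 hδ0).trans hcard
  have : Nonempty V := Fintype.card_pos_iff.1 (by exact_mod_cast hcardpos)
  have hne : (cappedSimplex V (2 * δ)).Nonempty := by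
    refine cappedSimplex_nonempty ?_
    rw [one_div, inv_lt_comm₀ hδ0 hcardpos] at hcard
    linarith
  have hskew := transpose_dominanceMatrix fun y x => ∃ i, prec i y x
  obtain ⟨w, hw, hopt⟩ := exists_forall_dotProduct_vecMul_nonneg hskew
    hne (convex_cappedSimplex _) (isCompact_cappedSimplex _)
  have hlight (x : V) (hx : w x < δ) :
      ∃ i, (1 : ℝ) / (2 * k) ≤ ∑ y ∈ univ.filter (fun y => y = x ∨ prec i y x), w y := by
    have hbal : 0 ≤ (w ᵥ* dominanceMatrix fun y x => ∃ i, prec i y x) x :=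
      apply_nonneg_of_lt_of_forall_dotProduct_nonneg hw (dotProduct_vecMul_self_eq_zero hskew w)
      hopt (show w x < 2 * δ by linarith)
    obtain ⟨i, hi⟩ :=
      exists_le_sum_filter_of_vecMul_dominanceMatrix_nonneg prec hcomplete hw.1 hbal
    exact ⟨i, by rwa [Fintype.card_fin] at hi⟩
  choose! c hc using hlight
  refine ⟨w, fun i => {x | w x < δ ∧ c x = i}, {x | δ ≤ w x}, hw.1.1, hw.1.2, ?_, ?_, ?_, ?_, ?_⟩
  · exact fun i j hij => Set.disjoint_left.2 fun x hi hj => hij (hi.2.symm.trans hj.2)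
  · exact fun i => Set.disjoint_left.2 fun x hi hR => (not_le.2 hi.1) hR
  · ext x
    by_cases hx : δ ≤ w x <;> simp [hx, not_le.1]
  · rintro i x ⟨hx, rfl⟩
    exact ⟨by linarith, hc x hx⟩
  · have hcap : ∀ x, w x ≤ 2 * δ := hw.2
    exact fun x hx => ⟨hx, by linarith [hcap x]⟩

/-- For a finite complete multidigraph whose arc set is the union of `k` quasi
orders `≺₁, …, ≺_k`, on more than `1/δ` vertices, there is a probability
distribution `w` and a partition of the vertices into `T₁, …, T_k, R` such that
for `x ∈ T_i` we have `w(x) ≤ 2δ` and `w(N⁻_i(x)) ≥ 1/(2k)`, and `δ ≤ w(x) ≤ 4δ`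
for `x ∈ R`. -/
theorem stmt_8 {V : Type*} [Fintype V] [DecidableEq V] (k : ℕ) (hk : 1 ≤ k)
    (prec : Fin k → V → V → Prop)
    [∀ i x y, Decidable (prec i x y)]
    (hrefl : ∀ i, Reflexive (prec i)) (htrans : ∀ i, Transitive (prec i))
    (hcomplete : ∀ x y : V, x ≠ y → ∃ i, prec i x y ∨ prec i y x)
    (δ : ℝ) (hδ0 : 0 < δ) (hδ1 : δ < 1) (hcard : (1 : ℝ) / δ < Fintype.card V) :
    ∃ (w : V → ℝ) (T : Fin k → Set V) (R : Set V),
      (∀ v, 0 ≤ w v) ∧ (∑ v, w v = 1) ∧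
      (∀ i j : Fin k, i ≠ j → Disjoint (T i) (T j)) ∧
      (∀ i, Disjoint (T i) R) ∧
      ((⋃ i, T i) ∪ R = Set.univ) ∧
      (∀ i : Fin k, ∀ x ∈ T i, w x ≤ 2 * δ ∧
        (1 : ℝ) / (2 * k) ≤ ∑ y ∈ univ.filter (fun y => y = x ∨ prec i y x), w y) ∧
      (∀ x ∈ R, δ ≤ w x ∧ w x ≤ 4 * δ) :=
  stmt_8_general k hk prec hcomplete δ hδ0 hcard
end

section
/- Let C be a planar convex body illuminated by three directions u₁, u₂, u₃ (every boundary point is illuminated by at least one u_i), and suppose no two of the directions suffice to illuminate all of ∂C. Then there exists a boundary point illuminated simultaneously by u₁ and u₂. -/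
/-- Direction `u` illuminates the boundary point `b` of `C`. -/
def Illuminates (C : Set (EuclideanSpace ℝ (Fin 2))) (u b : EuclideanSpace ℝ (Fin 2)) : Prop :=
  ∃ l : ℝ, 0 < l ∧ b + l • u ∈ interior C

open Set Filter Topology

private lemma dark_preconnected (C : Set (EuclideanSpace ℝ (Fin 2))) (hconv : Convex ℝ C)
    (hcomp : IsCompact C) (hint : (interior C).Nonempty)
    (u : EuclideanSpace ℝ (Fin 2)) (hu : ‖u‖ = 1) :
    IsPreconnected {b | b ∈ frontier C ∧ ∀ l : ℝ, 0 < l → b + l • u ∉ interior C} := by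
  obtain ⟨x₀, hx₀⟩ := hint
  have hCne : C.Nonempty := ⟨x₀, interior_subset hx₀⟩
  have hCclosed : IsClosed C := hcomp.isClosed
  have h01 : u 0 ^ 2 + u 1 ^ 2 = 1 := by
    have h := EuclideanSpace.norm_eq u
    rw [hu] at h
    have h2 : Real.sqrt (∑ i, ‖u i‖ ^ 2) = 1 := h.symm
    rw [Real.sqrt_eq_one] at h2
    simpa [Fin.sum_univ_two, Real.norm_eq_abs, sq_abs] using h2
  set f : EuclideanSpace ℝ (Fin 2) := WithLp.toLp 2 ![-u 1, u 0] with hf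
  have hnf : ‖f‖ = 1 := by
    rw [EuclideanSpace.norm_eq, Real.sqrt_eq_one]
    simp only [hf, Fin.sum_univ_two, Real.norm_eq_abs, sq_abs, Matrix.cons_val_zero,
      Matrix.cons_val_one, Matrix.head_cons]
    linear_combination h01
  set F : EuclideanSpace ℝ (Fin 2) → ℝ := fun x => u 0 * x 1 - u 1 * x 0 with hFdef
  set T : EuclideanSpace ℝ (Fin 2) → ℝ := fun x => u 0 * x 0 + u 1 * x 1 with hTdef
  have cont0 : Continuous fun x : EuclideanSpace ℝ (Fin 2) => x 0 :=
    (EuclideanSpace.proj (0 : Fin 2)).continuous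
  have cont1 : Continuous fun x : EuclideanSpace ℝ (Fin 2) => x 1 :=
    (EuclideanSpace.proj (1 : Fin 2)).continuous
  have contF : Continuous F := (continuous_const.mul cont1).sub (continuous_const.mul cont0)
  have contT : Continuous T := (continuous_const.mul cont0).add (continuous_const.mul cont1)
  set p : ℝ → ℝ → EuclideanSpace ℝ (Fin 2) := fun s t => s • f + t • u with hp
  have contp : ∀ s : ℝ, Continuous fun t => p s t := fun s =>
    continuous_const.add (continuous_id.smul continuous_const)
  have hexp : ∀ x : EuclideanSpace ℝ (Fin 2), p (F x) (T x) = x := by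
    intro x
    ext i
    fin_cases i
    · show (u 0 * x 1 - u 1 * x 0) * f 0 + (u 0 * x 0 + u 1 * x 1) * u 0 = x 0
      simp only [hf, Matrix.cons_val_zero]
      linear_combination x 0 * h01
    · show (u 0 * x 1 - u 1 * x 0) * f 1 + (u 0 * x 0 + u 1 * x 1) * u 1 = x 1
      simp only [hf, Matrix.cons_val_one, Matrix.head_cons, Matrix.cons_val_zero]
      linear_combination x 1 * h01
  have hFp : ∀ s t : ℝ, F (p s t) = s := by
    intro s t
    show u 0 * (s * f 1 + t * u 1) - u 1 * (s * f 0 + t * u 0) = s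
    simp only [hf, Matrix.cons_val_zero, Matrix.cons_val_one, Matrix.head_cons]
    linear_combination s * h01
  have hTp : ∀ s t : ℝ, T (p s t) = t := by
    intro s t
    show u 0 * (s * f 0 + t * u 0) + u 1 * (s * f 1 + t * u 1) = t
    simp only [hf, Matrix.cons_val_zero, Matrix.cons_val_one, Matrix.head_cons]
    linear_combination t * h01
  have hFadd : ∀ (x : EuclideanSpace ℝ (Fin 2)) (l : ℝ), F (x + l • u) = F x := by
    intro x l
    show u 0 * (x 1 + l * u 1) - u 1 * (x 0 + l * u 0) = u 0 * x 1 - u 1 * x 0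
    ring
  have hFsubf : ∀ (x : EuclideanSpace ℝ (Fin 2)) (c : ℝ), F (x + c • f) = F x + c := by
    intro x c
    show u 0 * (x 1 + c * f 1) - u 1 * (x 0 + c * f 0) = (u 0 * x 1 - u 1 * x 0) + c
    simp only [hf, Matrix.cons_val_zero, Matrix.cons_val_one, Matrix.head_cons]
    linear_combination c * h01
  have hpshift : ∀ s t l : ℝ, p s t + l • u = p s (t + l) := by
    intro s t l
    show s • f + t • u + l • u = s • f + (t + l) • u
    rw [add_smul, add_assoc]
  have hcombo : ∀ a b s1 s2 t1 t2 : ℝ, a + b = 1 →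
      p (a * s1 + b * s2) (a * t1 + b * t2) = a • p s1 t1 + b • p s2 t2 := by
    intro a b s1 s2 t1 t2 hab
    show (a * s1 + b * s2) • f + (a * t1 + b * t2) • u
        = a • (s1 • f + t1 • u) + b • (s2 • f + t2 • u)
    rw [smul_add, smul_add, smul_smul, smul_smul, smul_smul, smul_smul,
      add_add_add_comm, ← add_smul, ← add_smul]
  -- range of F on C
  set K := F '' C with hK
  have hKcomp : IsCompact K := hcomp.image contF
  have hKne : K.Nonempty := hCne.image F
  set m := sInf K with hm
  set M := sSup K with hM
  have hmK : m ∈ K := hKcomp.sInf_mem hKne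
  have hMK : M ∈ K := hKcomp.sSup_mem hKne
  have hmle : ∀ x ∈ C, m ≤ F x := fun x hx => csInf_le hKcomp.bddBelow ⟨x, hx, rfl⟩
  have hleM : ∀ x ∈ C, F x ≤ M := fun x hx => le_csSup hKcomp.bddAbove ⟨x, hx, rfl⟩
  have hintF : ∀ y ∈ interior C, F y ∈ Ioo m M := by
    intro y hy
    obtain ⟨ε, hε, hball⟩ := Metric.isOpen_iff.1 isOpen_interior y hy
    have hd : ∀ c : ℝ, |c| < ε → y + c • f ∈ C := by
      intro c hc
      refine interior_subset (hball ?_)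
      rw [Metric.mem_ball, dist_eq_norm, add_sub_cancel_left, norm_smul, hnf, mul_one,
        Real.norm_eq_abs]
      exact hc
    have habs : |(-(ε / 2) : ℝ)| < ε ∧ |(ε / 2 : ℝ)| < ε := by
      rw [abs_neg, abs_of_pos (by linarith)]
      constructor <;> linarith
    constructor
    · have h1 := hmle _ (hd (-(ε / 2)) habs.1)
      rw [hFsubf] at h1
      exact lt_of_le_of_lt h1 (by linarith)
    · have h1 := hleM _ (hd (ε / 2) habs.2)
      rw [hFsubf] at h1
      exact lt_of_lt_of_le (by linarith) h1
  have hmM : m < M := lt_trans (hintF x₀ hx₀).1 (hintF x₀ hx₀).2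
  -- slices
  set slice : ℝ → Set ℝ := fun s => {t | p s t ∈ C} with hslice
  have hsliceSub : ∀ s, slice s ⊆ T '' C := fun s t ht => ⟨p s t, ht, hTp s t⟩
  have hTC : IsCompact (T '' C) := hcomp.image contT
  have hsliceComp : ∀ s, IsCompact (slice s) :=
    fun s => hTC.of_isClosed_subset (hCclosed.preimage (contp s)) (hsliceSub s)
  have hsliceConvex : ∀ s, Convex ℝ (slice s) := by
    intro s t1 ht1 t2 ht2 a b ha hb hab
    have key : p s (a * t1 + b * t2) ∈ C := by
      have hs : a * s + b * s = s := by rw [← add_mul, hab, one_mul]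
      rw [show (s : ℝ) = a * s + b * s from hs.symm, hcombo a b s s t1 t2 hab]
      exact hconv ht1 ht2 ha hb hab
    simpa [hslice, smul_eq_mul] using key
  have hsliceNe : ∀ s ∈ Icc m M, (slice s).Nonempty := by
    intro s hs
    have hsK : s ∈ K := by
      obtain ⟨xm, hxm, hFxm⟩ := hmK
      obtain ⟨xM, hxM, hFxM⟩ := hMK
      have := IsPreconnected.intermediate_value hconv.isPreconnected hxm hxM
        contF.continuousOn
      exact this (by rw [hFxm, hFxM]; exact hs)
    obtain ⟨x, hxC, hFx⟩ := hsK
    refine ⟨T x, ?_⟩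
    show p s (T x) ∈ C
    rw [← hFx, hexp x]
    exact hxC
  set g : ℝ → ℝ := fun s => sInf (slice s) with hg
  set h : ℝ → ℝ := fun s => sSup (slice s) with hh
  have hgmem : ∀ s ∈ Icc m M, g s ∈ slice s := fun s hs => (hsliceComp s).sInf_mem (hsliceNe s hs)
  have hhmem : ∀ s ∈ Icc m M, h s ∈ slice s := fun s hs => (hsliceComp s).sSup_mem (hsliceNe s hs)
  have hlehs : ∀ s t, t ∈ slice s → t ≤ h s :=
    fun s t ht => le_csSup (hTC.bddAbove.mono (hsliceSub s)) ht
  have hgle : ∀ s t, t ∈ slice s → g s ≤ t :=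
    fun s t ht => csInf_le (hTC.bddBelow.mono (hsliceSub s)) ht
  have hconcave : ConcaveOn ℝ (Icc m M) h := by
    refine ⟨convex_Icc m M, ?_⟩
    intro s1 hs1 s2 hs2 a b ha hb hab
    have hmemC : p (a * s1 + b * s2) (a * h s1 + b * h s2) ∈ C := by
      rw [hcombo a b s1 s2 (h s1) (h s2) hab]
      exact hconv (hhmem s1 hs1) (hhmem s2 hs2) ha hb hab
    simpa [smul_eq_mul] using hlehs _ _ hmemC
  have hgconvex : ConvexOn ℝ (Icc m M) g := by
    refine ⟨convex_Icc m M, ?_⟩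
    intro s1 hs1 s2 hs2 a b ha hb hab
    have hmemC : p (a * s1 + b * s2) (a * g s1 + b * g s2) ∈ C := by
      rw [hcombo a b s1 s2 (g s1) (g s2) hab]
      exact hconv (hgmem s1 hs1) (hgmem s2 hs2) ha hb hab
    simpa [smul_eq_mul] using hgle _ _ hmemC
  have hhcont : ContinuousOn h (Ioo m M) :=
    (hconcave.subset Ioo_subset_Icc_self (convex_Ioo m M)).continuousOn isOpen_Ioo
  have hgcont : ContinuousOn g (Ioo m M) :=
    (hgconvex.subset Ioo_subset_Icc_self (convex_Ioo m M)).continuousOn isOpen_Ioo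
  -- interior characterization
  have hIntMem : ∀ s t : ℝ, s ∈ Ioo m M → g s < t → t < h s → p s t ∈ interior C := by
    intro s t hs hgt hth
    rw [mem_interior_iff_mem_nhds]
    have hFps : F (p s t) = s := hFp s t
    have hTps : T (p s t) = t := hTp s t
    have hFc : ContinuousAt F (p s t) := contF.continuousAt
    have hTc : ContinuousAt T (p s t) := contT.continuousAt
    have hgs : ContinuousAt g s := hgcont.continuousAt (isOpen_Ioo.mem_nhds hs)
    have hhs : ContinuousAt h s := hhcont.continuousAt (isOpen_Ioo.mem_nhds hs)
    have hgF : ContinuousAt (fun x => g (F x)) (p s t) := by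
      have := ContinuousAt.comp (g := g) (f := F) (x := p s t) (by rw [hFps]; exact hgs) hFc
      exact this
    have hhF : ContinuousAt (fun x => h (F x)) (p s t) := by
      have := ContinuousAt.comp (g := h) (f := F) (x := p s t) (by rw [hFps]; exact hhs) hFc
      exact this
    have e1 : ∀ᶠ x in 𝓝 (p s t), F x ∈ Ioo m M :=
      hFc.eventually_mem (isOpen_Ioo.mem_nhds (by rw [hFps]; exact hs))
    have e2 : ∀ᶠ x in 𝓝 (p s t), g (F x) < T x :=
      hgF.eventually_lt hTc (by rw [hFps, hTps]; exact hgt)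
    have e3 : ∀ᶠ x in 𝓝 (p s t), T x < h (F x) :=
      hTc.eventually_lt hhF (by rw [hFps, hTps]; exact hth)
    filter_upwards [e1, e2, e3] with x h1 h2 h3
    have hsub : Icc (g (F x)) (h (F x)) ⊆ slice (F x) :=
      (hsliceConvex (F x)).ordConnected.out (hgmem _ (Ioo_subset_Icc_self h1))
        (hhmem _ (Ioo_subset_Icc_self h1))
    have hxmem : p (F x) (T x) ∈ C := hsub ⟨le_of_lt h2, le_of_lt h3⟩
    rwa [hexp x] at hxmem
  -- the dark set and its pieces
  set N := {b : EuclideanSpace ℝ (Fin 2) |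
    b ∈ frontier C ∧ ∀ l : ℝ, 0 < l → b + l • u ∉ interior C} with hN
  set segm := {x : EuclideanSpace ℝ (Fin 2) | x ∈ C ∧ F x = m} with hsegm
  set segM := {x : EuclideanSpace ℝ (Fin 2) | x ∈ C ∧ F x = M} with hsegM
  set curve := (fun s => p s (h s)) '' Ioo m M with hcurve
  have hfrontsub : frontier C ⊆ C := hCclosed.frontier_subset
  have hNeq : N = segm ∪ curve ∪ segM := by
    apply Set.Subset.antisymm
    · rintro b ⟨hbF, hbdark⟩
      have hbC : b ∈ C := hfrontsub hbF
      have hFb : F b ∈ Icc m M := ⟨hmle b hbC, hleM b hbC⟩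
      rcases eq_or_lt_of_le hFb.1 with heq | hlt
      · exact Or.inl (Or.inl ⟨hbC, heq.symm⟩)
      rcases eq_or_lt_of_le hFb.2 with heq | hlt2
      · exact Or.inr ⟨hbC, heq⟩
      have hIoo : F b ∈ Ioo m M := ⟨hlt, hlt2⟩
      have hTb : T b ∈ slice (F b) := by
        show p (F b) (T b) ∈ C
        rw [hexp]; exact hbC
      have hTle : T b ≤ h (F b) := hlehs _ _ hTb
      rcases eq_or_lt_of_le hTle with heq | hTlt
      · refine Or.inl (Or.inr ⟨F b, hIoo, ?_⟩)
        show p (F b) (h (F b)) = b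
        rw [← heq, hexp]
      · exfalso
        have hl : 0 < (h (F b) - T b) / 2 := div_pos (sub_pos.2 hTlt) two_pos
        apply hbdark _ hl
        have hbp : b + ((h (F b) - T b) / 2) • u = p (F b) (T b + (h (F b) - T b) / 2) := by
          conv_lhs => rw [← hexp b]
          rw [hpshift, hFp, hTp]
        rw [hbp]
        refine hIntMem (F b) _ hIoo (lt_of_le_of_lt (hgle _ _ hTb) (lt_add_of_pos_right _ hl))
          (by clear_value F T h; linarith only [hTlt])
    · rintro x ((⟨hxC, hFx⟩ | ⟨s, hs, rfl⟩) | ⟨hxC, hFx⟩)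
      · refine ⟨⟨subset_closure hxC, fun hxi => ?_⟩, fun l hl hmem => ?_⟩
        · exact absurd hFx.symm (ne_of_lt (hintF x hxi).1)
        · have := (hintF _ hmem).1
          rw [hFadd, hFx] at this
          exact lt_irrefl m this
      · have hsIcc : s ∈ Icc m M := Ioo_subset_Icc_self hs
        have hpC : p s (h s) ∈ C := hhmem s hsIcc
        refine ⟨⟨subset_closure hpC, fun hxi => ?_⟩, fun l hl hmem => ?_⟩
        · obtain ⟨ε, hε, hball⟩ := Metric.isOpen_iff.1 isOpen_interior _ hxi
          have hmem2 : p s (h s) + (ε / 2) • u ∈ C := by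
            refine interior_subset (hball ?_)
            rw [Metric.mem_ball, dist_eq_norm, add_sub_cancel_left, norm_smul, hu, mul_one,
              Real.norm_eq_abs, abs_of_pos (by linarith)]
            linarith
          rw [hpshift] at hmem2
          have hle2 := hlehs s _ hmem2
          clear_value h
          linarith only [hle2, hε]
        · rw [hpshift] at hmem
          have hsl : p s (h s + l) ∈ C := interior_subset hmem
          have hle2 := hlehs s (h s + l) hsl
          clear_value h
          linarith only [hle2, hl]
      · refine ⟨⟨subset_closure hxC, fun hxi => ?_⟩, fun l hl hmem => ?_⟩
        · exact absurd hFx (ne_of_lt (hintF x hxi).2)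
        · have := (hintF _ hmem).2
          rw [hFadd, hFx] at this
          exact lt_irrefl M this
  -- pieces are preconnected
  have haffF : ∀ (a b : ℝ) (x y : EuclideanSpace ℝ (Fin 2)),
      F (a • x + b • y) = a * F x + b * F y := by
    intro a b x y
    show u 0 * (a * x 1 + b * y 1) - u 1 * (a * x 0 + b * y 0) = _
    ring
  have hsegmPre : IsPreconnected segm := by
    refine Convex.isPreconnected ?_
    intro x hx y hy a b ha hb hab
    exact ⟨hconv hx.1 hy.1 ha hb hab, by rw [haffF, hx.2, hy.2, ← add_mul, hab, one_mul]⟩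
  have hsegMPre : IsPreconnected segM := by
    refine Convex.isPreconnected ?_
    intro x hx y hy a b ha hb hab
    exact ⟨hconv hx.1 hy.1 ha hb hab, by rw [haffF, hx.2, hy.2, ← add_mul, hab, one_mul]⟩
  have hcurvePre : IsPreconnected curve := by
    refine IsPreconnected.image isPreconnected_Ioo _ ?_
    have : ContinuousOn (fun s : ℝ => s • f + h s • u) (Ioo m M) :=
      ((continuousOn_id.smul continuousOn_const).add (hhcont.smul continuousOn_const))
    exact this
  -- linking points
  have hlink : ∀ c : ℝ, c ∈ Icc m M →
      (∀ sq : ℕ → ℝ, (∀ n, sq n ∈ Ioo m M) → Tendsto sq atTop (𝓝 c) →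
        ∃ q, (q ∈ C ∧ F q = c) ∧ q ∈ closure curve) := by
    intro c _ sq hsqIoo htend
    have hxqC : ∀ n, p (sq n) (h (sq n)) ∈ C := fun n =>
      hhmem _ (Ioo_subset_Icc_self (hsqIoo n))
    obtain ⟨q, hqC, ψ, hψ, hconv'⟩ := hcomp.tendsto_subseq hxqC
    refine ⟨q, ⟨hqC, ?_⟩, ?_⟩
    · have h1 : Tendsto (fun n => F (p (sq (ψ n)) (h (sq (ψ n))))) atTop (𝓝 (F q)) :=
        (contF.continuousAt.tendsto).comp hconv'
      have h2 : (fun n => F (p (sq (ψ n)) (h (sq (ψ n))))) = fun n => sq (ψ n) := by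
        funext n; exact hFp _ _
      rw [h2] at h1
      exact tendsto_nhds_unique h1 (htend.comp hψ.tendsto_atTop)
    · exact mem_closure_of_tendsto hconv'
        (Eventually.of_forall fun n => ⟨sq (ψ n), hsqIoo _, rfl⟩)
  have hseq : ∀ c : ℝ, c = m ∨ c = M →
      ∃ sq : ℕ → ℝ, (∀ n, sq n ∈ Ioo m M) ∧ Tendsto sq atTop (𝓝 c) := by
    intro c hc
    have hbase : Tendsto (fun n : ℕ => (M - m) / (n + 2)) atTop (𝓝 0) := by
      have h0 := (tendsto_const_div_atTop_nhds_zero_nat (M - m)).comp (tendsto_add_atTop_nat 2)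
      have : (fun n : ℕ => (M - m) / ((n + 2 : ℕ) : ℝ)) = fun n : ℕ => (M - m) / (n + 2) := by
        funext n; push_cast; ring
      rwa [Function.comp_def, this] at h0
    have hpos : ∀ n : ℕ, 0 < (M - m) / ((n : ℝ) + 2) := by
      intro n
      apply div_pos (by linarith)
      positivity
    have hlt : ∀ n : ℕ, (M - m) / ((n : ℝ) + 2) < M - m := by
      intro n
      apply div_lt_self (by linarith)
      have : (0 : ℝ) ≤ (n : ℝ) := Nat.cast_nonneg n
      linarith
    rcases hc with rfl | rfl
    · refine ⟨fun n => m + (M - m) / (n + 2),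
        fun n => ⟨by linarith only [hpos n], by linarith only [hlt n]⟩, ?_⟩
      have := hbase.const_add m
      simpa using this
    · refine ⟨fun n => M - (M - m) / (n + 2),
        fun n => ⟨by linarith only [hlt n], by linarith only [hpos n]⟩, ?_⟩
      have := hbase.const_sub M
      simpa using this
  obtain ⟨sq1, hsq1, htend1⟩ := hseq m (Or.inl rfl)
  obtain ⟨q1, hq1seg, hq1cl⟩ := hlink m (left_mem_Icc.2 hmM.le) sq1 hsq1 htend1
  obtain ⟨sq2, hsq2, htend2⟩ := hseq M (Or.inr rfl)
  obtain ⟨q2, hq2seg, hq2cl⟩ := hlink M (right_mem_Icc.2 hmM.le) sq2 hsq2 htend2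
  -- assemble
  have hA : IsPreconnected (curve ∪ {q1}) :=
    hcurvePre.subset_closure subset_union_left
      (union_subset subset_closure (singleton_subset_iff.2 hq1cl))
  have hB : IsPreconnected (segm ∪ (curve ∪ {q1})) :=
    IsPreconnected.union q1 hq1seg (mem_union_right _ (mem_singleton _)) hsegmPre hA
  have hBeq : segm ∪ (curve ∪ {q1}) = segm ∪ curve := by
    rw [union_comm curve, ← union_assoc]
    congr 1
    exact union_eq_self_of_subset_right (singleton_subset_iff.2 hq1seg)
  rw [hBeq] at hB
  have hC2 : IsPreconnected (segm ∪ curve ∪ {q2}) :=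
    hB.subset_closure subset_union_left
      (union_subset subset_closure
        (singleton_subset_iff.2 ((closure_mono subset_union_right) hq2cl)))
  have hD : IsPreconnected ((segm ∪ curve ∪ {q2}) ∪ segM) :=
    IsPreconnected.union q2 (mem_union_right _ (mem_singleton _)) hq2seg hC2 hsegMPre
  have hDeq : (segm ∪ curve ∪ {q2}) ∪ segM = segm ∪ curve ∪ segM := by
    rw [union_assoc (segm ∪ curve)]
    congr 1
    exact union_eq_self_of_subset_left (singleton_subset_iff.2 hq2seg)
  rw [hDeq] at hD
  rw [hNeq]
  exact hD

private lemma illum_open (C : Set (EuclideanSpace ℝ (Fin 2))) (u : EuclideanSpace ℝ (Fin 2)) :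
    IsOpen {b | Illuminates C u b} := by
  have heq : {b | Illuminates C u b} =
      ⋃ l : ℝ, ⋃ _ : 0 < l, (fun b => b + l • u) ⁻¹' interior C := by
    ext b
    simp [Illuminates]
  rw [heq]
  exact isOpen_iUnion fun l => isOpen_iUnion fun _ =>
    isOpen_interior.preimage (continuous_id.add continuous_const)

/-- If a planar convex body is illuminated by three directions, no two of which
suffice to illuminate the whole boundary, then some boundary point is
illuminated simultaneously by the first two directions. -/
theorem stmt_11 (C : Set (EuclideanSpace ℝ (Fin 2))) (hconv : Convex ℝ C)
    (hcomp : IsCompact C) (hint : (interior C).Nonempty)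
    (u₁ u₂ u₃ : EuclideanSpace ℝ (Fin 2))
    (h₁ : ‖u₁‖ = 1) (h₂ : ‖u₂‖ = 1) (h₃ : ‖u₃‖ = 1)
    (hillum : ∀ b ∈ frontier C,
      Illuminates C u₁ b ∨ Illuminates C u₂ b ∨ Illuminates C u₃ b)
    (hno2 : ∀ u v : EuclideanSpace ℝ (Fin 2),
      (u = u₁ ∨ u = u₂ ∨ u = u₃) → (v = u₁ ∨ v = u₂ ∨ v = u₃) → u ≠ v →
      ∃ b ∈ frontier C, ¬ Illuminates C u b ∧ ¬ Illuminates C v b) :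
    ∃ b ∈ frontier C, Illuminates C u₁ b ∧ Illuminates C u₂ b := by
  classical
  have hdark : ∀ u b : EuclideanSpace ℝ (Fin 2),
      ¬ Illuminates C u b → ∀ l : ℝ, 0 < l → b + l • u ∉ interior C := by
    intro u b hnb
    simpa only [Illuminates, not_exists, not_and] using hnb
  by_cases h12 : u₁ = u₂
  · by_cases h13 : u₁ = u₃
    · -- all three directions coincide
      have hCn : C.Nonempty := by
        obtain ⟨x₀, hx₀⟩ := hint
        exact ⟨x₀, interior_subset hx₀⟩
      have hfr : (frontier C).Nonempty := by
        rw [nonempty_frontier_iff]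
        exact ⟨hCn, hcomp.ne_univ⟩
      obtain ⟨b, hb⟩ := hfr
      rcases hillum b hb with hI | hI | hI
      · exact ⟨b, hb, hI, by rw [← h12]; exact hI⟩
      · exact ⟨b, hb, by rw [h12]; exact hI, hI⟩
      · exact ⟨b, hb, by rw [h13]; exact hI, by rw [← h12, h13]; exact hI⟩
    · obtain ⟨b, hb, nb1, nb3⟩ := hno2 u₁ u₃ (Or.inl rfl) (Or.inr (Or.inr rfl)) h13
      rcases hillum b hb with hI | hI | hI
      · exact absurd hI nb1
      · exact ⟨b, hb, by rw [h12]; exact hI, hI⟩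
      · exact absurd hI nb3
  · by_cases h31 : u₃ = u₁
    · obtain ⟨b, hb, nb1, nb2⟩ := hno2 u₁ u₂ (Or.inl rfl) (Or.inr (Or.inl rfl)) h12
      rcases hillum b hb with hI | hI | hI
      · exact absurd hI nb1
      · exact absurd hI nb2
      · rw [h31] at hI
        exact absurd hI nb1
    by_cases h32 : u₃ = u₂
    · obtain ⟨b, hb, nb1, nb2⟩ := hno2 u₁ u₂ (Or.inl rfl) (Or.inr (Or.inl rfl)) h12
      rcases hillum b hb with hI | hI | hI
      · exact absurd hI nb1
      · exact absurd hI nb2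
      · rw [h32] at hI
        exact absurd hI nb2
    -- main case: all three directions pairwise distinct
    by_contra hgoal
    push_neg at hgoal
    set N := {b : EuclideanSpace ℝ (Fin 2) |
      b ∈ frontier C ∧ ∀ l : ℝ, 0 < l → b + l • u₃ ∉ interior C} with hN
    have hNpre : IsPreconnected N := dark_preconnected C hconv hcomp hint u₃ h₃
    have hNsub : N ⊆ {b | Illuminates C u₁ b} ∪ {b | Illuminates C u₂ b} := by
      rintro b ⟨hbF, hbdark⟩
      rcases hillum b hbF with hI | hI | hI
      · exact Or.inl hI
      · exact Or.inr hI
      · obtain ⟨l, hl, hmem⟩ := hI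
        exact absurd hmem (hbdark l hl)
    have hcases : ¬(N ∩ {b | Illuminates C u₁ b}).Nonempty ∨
        ¬(N ∩ {b | Illuminates C u₂ b}).Nonempty := by
      by_contra hcon
      push_neg at hcon
      obtain ⟨b, ⟨hbF, _⟩, hb1, hb2⟩ :=
        hNpre _ _ (illum_open C u₁) (illum_open C u₂) hNsub hcon.1 hcon.2
      exact hgoal b hbF hb1 hb2
    rcases hcases with hc | hc
    · obtain ⟨b, hb, nb2, nb3⟩ := hno2 u₂ u₃ (Or.inr (Or.inl rfl)) (Or.inr (Or.inr rfl))
        (fun hEq => h32 hEq.symm)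
      have hbN : b ∈ N := ⟨hb, hdark u₃ b nb3⟩
      rcases hNsub hbN with hI | hI
      · exact hc ⟨b, hbN, hI⟩
      · exact nb2 hI
    · obtain ⟨b, hb, nb1, nb3⟩ := hno2 u₁ u₃ (Or.inl rfl) (Or.inr (Or.inr rfl))
        (fun hEq => h31 hEq.symm)
      have hbN : b ∈ N := ⟨hb, hdark u₃ b nb3⟩
      rcases hNsub hbN with hI | hI
      · exact nb1 hI
      · exact hc ⟨b, hbN, hI⟩
end
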